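/- (Compatibility of adjacent residual polynomials on the ramification polygon) Let f ∈ O_K[x] be Eisenstein with ramification polygon R with segments S_1, ..., S_ℓ (ordered left to right) and residual polynomials A_1, ..., A_ℓ ∈ κ[x]. Then the residual polynomial A_ℓ of the rightmost segment is monic, and for 1 ≤ i ≤ ℓ−1 the leading coefficient of A_i equals the constant coefficient of A_{i+1}. -/

import Mathlib

open Polynomial

/-- An additive valuation `v` (written additively, with `v 0 = ⊤`) on a field `Ω`,
extending the `p`-adic valuation of `ℚ_[p]` (scaled by the ramification index `e`),
taking integer values on an intermediate field `K` and normalized so that a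
uniformizer `unif` of `K` has valuation `1`. -/
structure PadicSetup (p : ℕ) [Fact p.Prime] (K Ω : Type*) [Field K] [Field Ω]
    [Algebra ℚ_[p] K] [Algebra ℚ_[p] Ω] [Algebra K Ω] [IsScalarTower ℚ_[p] K Ω] where
  v : Ω → WithTop ℚ
  v_top_iff : ∀ x : Ω, v x = ⊤ ↔ x = 0
  v_mul : ∀ x y : Ω, v (x * y) = v x + v y
  v_add : ∀ x y : Ω, min (v x) (v y) ≤ v (x + y)
  e : ℕ
  e_pos : 0 < e
  v_padic : ∀ x : ℚ_[p], x ≠ 0 →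
    v (algebraMap ℚ_[p] Ω x) = (((e : ℤ) * x.valuation : ℤ) : ℚ)
  v_int : ∀ x : K, x ≠ 0 → ∃ m : ℤ, v (algebraMap K Ω x) = ((m : ℚ) : WithTop ℚ)
  unif : K
  v_unif : v (algebraMap K Ω unif) = 1

variable {p : ℕ} [Fact p.Prime] {K Ω : Type*} [Field K] [Field Ω]
    [Algebra ℚ_[p] K] [Algebra ℚ_[p] Ω] [Algebra K Ω] [IsScalarTower ℚ_[p] K Ω]

/-- `f` is an Eisenstein polynomial of degree `n` over `K` (with respect to the
normalized valuation of `K`): monic of degree `n`, all lower coefficients have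
valuation at least `1`, and the constant coefficient has valuation exactly `1`. -/
def PadicSetup.IsEisensteinOfDegree (S : PadicSetup p K Ω) (f : K[X]) (n : ℕ) : Prop :=
  f.Monic ∧ f.natDegree = n ∧ (∀ i < n, 1 ≤ S.v (algebraMap K Ω (f.coeff i))) ∧
    S.v (algebraMap K Ω (f.coeff 0)) = 1

/-- The `i`-th coefficient of the ramification polynomial `ρ(x) = f(αx+α)/αⁿ` of `f`,
namely `ρ_i = ∑_{k=i}^n C(k,i) f_k α^{k-n}`. -/
noncomputable def PadicSetup.rho (S : PadicSetup p K Ω) (f : K[X]) (n : ℕ) (α : Ω)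
    (i : ℕ) : Ω :=
  ∑ k ∈ Finset.Icc i n, (k.choose i : Ω) * algebraMap K Ω (f.coeff k) * α ^ ((k : ℤ) - (n : ℤ))

/-!
The leading coefficient of `A_t` and the constant coefficient of `A_{t+1}` both come from the
common vertex `x_t`: since `h_t` and `e_t` are coprime, the segment `S_t` consists of whole steps
`(e_t, -h_t)`, so its last lattice point is `x_t` and the top coefficient of `A_t` is the residue of
`ρ_{x_t} α^{-m_t}`. As `v(α) = 1/n` for a root of an Eisenstein polynomial, this element is a unit,
so the residue is nonzero and really is the leading coefficient. At the last vertex `ρ_n = 1` and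
`m_ℓ = 0`, whence `A_ℓ` is monic.
-/

namespace AddValuation

variable {R Γ₀ : Type*} [Ring R] [LinearOrderedAddCommMonoidWithTop Γ₀]

theorem exists_ne_map_le_of_sum_eq_zero (v : AddValuation R Γ₀) {ι : Type*} {s : Finset ι}
    {g : ι → R} (hsum : ∑ i ∈ s, g i = 0) {i₀ : ι} (hi₀ : i₀ ∈ s) (hne : v (g i₀) ≠ ⊤) :
    ∃ i ∈ s, i ≠ i₀ ∧ v (g i) ≤ v (g i₀) := by
  classical
  by_contra! hlt
  have hsplit : g i₀ = -∑ i ∈ s.erase i₀, g i := by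
    rw [eq_neg_iff_add_eq_zero, Finset.add_sum_erase s g hi₀, hsum]
  have := v.map_lt_sum hne fun i hi =>
    hlt i (Finset.mem_of_mem_erase hi) (Finset.ne_of_mem_erase hi)
  rw [hsplit, v.map_neg] at this
  exact lt_irrefl _ this

end AddValuation

namespace Polynomial

variable {R : Type*} [Semiring R]

theorem coeff_sum_range_C_mul_X_pow (c : ℕ → R) (N k : ℕ) :
    (∑ j ∈ Finset.range N, C (c j) * X ^ j).coeff k = if k < N then c k else 0 := by
  simp only [finsetSum_coeff, coeff_C_mul_X_pow, Finset.sum_ite_eq, Finset.mem_range]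

theorem leadingCoeff_sum_range_succ_C_mul_X_pow (c : ℕ → R) {d : ℕ} (hc : c d ≠ 0) :
    (∑ j ∈ Finset.range (d + 1), C (c j) * X ^ j).leadingCoeff = c d := by
  have hd : (∑ j ∈ Finset.range (d + 1), C (c j) * X ^ j).coeff d = c d := by
    rw [coeff_sum_range_C_mul_X_pow, if_pos d.lt_succ_self]
  rw [leadingCoeff, natDegree_eq_of_le_of_coeff_ne_zero _ (hd ▸ hc), hd]
  exact natDegree_le_iff_coeff_eq_zero.2 fun k hk => by
    rw [coeff_sum_range_C_mul_X_pow, if_neg (by omega)]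

end Polynomial

theorem Nat.Coprime.exists_steps_of_slope {x₀ x₁ e h : ℕ} {m₀ m₁ : ℤ} (hcop : h.Coprime e)
    (he : 0 < e) (hx : x₀ ≤ x₁) (hslope : (e : ℤ) * (m₀ - m₁) = h * ((x₁ : ℤ) - x₀)) :
    ∃ d : ℕ, x₁ = x₀ + d * e ∧ m₁ = m₀ - d * h := by
  have hdvd : e ∣ x₁ - x₀ := by
    refine hcop.symm.dvd_of_dvd_mul_left (Int.natCast_dvd_natCast.1 ⟨m₀ - m₁, ?_⟩)
    push_cast [hx]
    linarith
  obtain ⟨d, hd⟩ := hdvd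
  refine ⟨d, by rw [mul_comm, ← hd]; omega, ?_⟩
  have hdZ : ((x₁ : ℤ) - x₀) = e * d := by rw [← Nat.cast_sub hx, hd, Nat.cast_mul]
  have : (e : ℤ) * (m₀ - m₁) = e * (d * h) := by rw [hslope, hdZ]; ring
  linarith [mul_left_cancel₀ (by exact_mod_cast he.ne' : (e : ℤ) ≠ 0) this]

section ResidualPolynomial

variable {κ : Type*} [Semiring κ] (res : Ω → κ) (ρ : ℕ → Ω) (α : Ω) (x₀ x₁ e h : ℕ) (m₀ : ℤ)

/-- Ore's residual polynomial of the segment of slope `-h/e` from `(x₀, m₀)` to abscissa `x₁` of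
the Newton polygon of `∑ ρᵢ Xⁱ` with respect to `v_α`. -/
noncomputable def residualPolynomial : κ[X] :=
  ∑ j ∈ Finset.range ((x₁ - x₀) / e + 1),
    C (res (ρ (x₀ + j * e) * α ^ ((j : ℤ) * (h : ℤ) - m₀))) * X ^ j

theorem coeff_zero_residualPolynomial :
    (residualPolynomial res ρ α x₀ x₁ e h m₀).coeff 0 = res (ρ x₀ * α ^ (-m₀)) := by
  simp [residualPolynomial]

end ResidualPolynomial

namespace PadicSetup

variable (S : PadicSetup p K Ω)

theorem v_zero : S.v 0 = ⊤ := (S.v_top_iff 0).2 rfl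

theorem v_one : S.v 1 = 0 := by
  obtain ⟨a, ha⟩ := WithTop.ne_top_iff_exists.1 (mt (S.v_top_iff 1).1 one_ne_zero)
  have h := S.v_mul 1 1
  rw [one_mul, ← ha] at h
  have : a = a + a := by exact_mod_cast h
  rw [← ha, show a = 0 by linarith, WithTop.coe_zero]

def toAddValuation : AddValuation Ω (WithTop ℚ) :=
  AddValuation.of S.v S.v_zero S.v_one S.v_add S.v_mul

@[simp] theorem toAddValuation_apply (z : Ω) : S.toAddValuation z = S.v z := rfl

theorem v_zpow {z : Ω} {a : ℚ} (h : S.v z = a) (k : ℤ) :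
    S.v (z ^ k) = ((k * a : ℚ) : WithTop ℚ) := by
  rw [← S.toAddValuation_apply] at h ⊢
  rcases k with k | k
  · rw [Int.ofNat_eq_natCast, zpow_natCast, AddValuation.map_pow, h, ← WithTop.coe_nsmul,
      nsmul_eq_mul]
    norm_cast
  · rw [zpow_negSucc, AddValuation.map_inv, AddValuation.map_pow, h, ← WithTop.coe_nsmul,
      ← WithTop.LinearOrderedAddCommGroup.coe_neg, nsmul_eq_mul]
    congr 1
    rw [Int.cast_negSucc]
    push_cast
    ring

theorem v_mul_zpow_neg_eq_zero {n : ℕ} (hn : n ≠ 0) {α : Ω}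
    (hα : S.v α = ((1 / n : ℚ) : WithTop ℚ)) {y : Ω} {m : ℤ}
    (hy : ((n : ℚ) : WithTop ℚ) * S.v y = ((m : ℚ) : WithTop ℚ)) :
    S.v (y * α ^ (-m)) = 0 := by
  have hnq : (n : ℚ) ≠ 0 := Nat.cast_ne_zero.2 hn
  obtain ⟨b, hb⟩ := WithTop.ne_top_iff_exists.1 (show S.v y ≠ ⊤ from fun htop => by
    rw [htop, WithTop.mul_top (WithTop.coe_ne_zero.2 hnq)] at hy
    exact WithTop.top_ne_coe hy)
  rw [← hb, ← WithTop.coe_mul, WithTop.coe_eq_coe] at hy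
  rw [S.v_mul, ← hb, S.v_zpow hα, ← WithTop.coe_add, ← WithTop.coe_zero, WithTop.coe_eq_coe]
  push_cast
  rw [← hy]
  field_simp
  ring

theorem leadingCoeff_residualPolynomial {κ : Type*} [Semiring κ] {res : Ω → κ}
    (res_eq_zero_iff : ∀ z : Ω, 0 ≤ S.v z → (res z = 0 ↔ 0 < S.v z)) {n : ℕ} (hn : n ≠ 0)
    {α : Ω} (hα : S.v α = ((1 / n : ℚ) : WithTop ℚ)) (ρ : ℕ → Ω) {x₀ x₁ e h : ℕ} {m₀ m₁ : ℤ}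
    (hcop : h.Coprime e) (he : 0 < e) (hx : x₀ ≤ x₁)
    (hslope : (e : ℤ) * (m₀ - m₁) = h * ((x₁ : ℤ) - x₀))
    (hm₁ : ((n : ℚ) : WithTop ℚ) * S.v (ρ x₁) = ((m₁ : ℚ) : WithTop ℚ)) :
    (residualPolynomial res ρ α x₀ x₁ e h m₀).leadingCoeff = res (ρ x₁ * α ^ (-m₁)) := by
  obtain ⟨d, rfl, rfl⟩ := hcop.exists_steps_of_slope he hx hslope
  have hunit := S.v_mul_zpow_neg_eq_zero hn hα hm₁
  have hd : (x₀ + d * e - x₀) / e = d := by rw [Nat.add_sub_cancel_left, Nat.mul_div_cancel _ he]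
  rw [neg_sub] at hunit ⊢
  rw [residualPolynomial, hd, leadingCoeff_sum_range_succ_C_mul_X_pow]
  exact fun h0 => ((res_eq_zero_iff _ hunit.ge).1 h0).ne' hunit

end PadicSetup

namespace PadicSetup.IsEisensteinOfDegree

variable {S : PadicSetup p K Ω} {f : K[X]} {n : ℕ}

theorem pos (hf : S.IsEisensteinOfDegree f n) : 0 < n := by
  obtain ⟨hmon, hdeg, -, hc0⟩ := hf
  refine Nat.pos_of_ne_zero fun hn => ?_
  subst hn
  rw [← hdeg, hmon.coeff_natDegree, map_one, S.v_one] at hc0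
  exact zero_ne_one hc0

theorem le_v_coeff_mul_pow (hf : S.IsEisensteinOfDegree f n) {α : Ω} {a : ℚ} (hα : S.v α = a)
    {i : ℕ} (hi : i < n) :
    ((1 + i * a : ℚ) : WithTop ℚ) ≤ S.v (algebraMap K Ω (f.coeff i) * α ^ i) := by
  rw [S.v_mul, ← zpow_natCast, S.v_zpow hα, WithTop.coe_add, Int.cast_natCast, WithTop.coe_one]
  exact add_le_add_left (hf.2.2.1 i hi) _

/-- Otherwise one term of `∑ fᵢ αⁱ = 0` would have valuation strictly below all the others. -/
theorem v_root (hf : S.IsEisensteinOfDegree f n) {α : Ω} (hα : aeval α f = 0) :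
    S.v α = ((1 / n : ℚ) : WithTop ℚ) := by
  have ⟨hmon, hdeg, _, hc0⟩ := hf
  have hn : (0 : ℚ) < n := Nat.cast_pos.2 hf.pos
  have hα0 : α ≠ 0 := by
    rintro rfl
    rw [← coeff_zero_eq_aeval_zero'] at hα
    rw [hα, S.v_zero] at hc0
    exact WithTop.top_ne_one hc0
  obtain ⟨a, ha⟩ := WithTop.ne_top_iff_exists.1 (mt (S.v_top_iff α).1 hα0)
  set g : ℕ → Ω := fun i => algebraMap K Ω (f.coeff i) * α ^ i with hg
  have hsum : ∑ i ∈ Finset.range (n + 1), g i = 0 := by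
    simp only [hg, ← Algebra.smul_def, ← hdeg, ← aeval_eq_sum_range, hα]
  have hg0 : S.v (g 0) = 1 := by simp only [hg, pow_zero, mul_one, hc0]
  have hgn : S.v (g n) = ((n * a : ℚ) : WithTop ℚ) := by
    simp only [hg]
    rw [← hdeg, hmon.coeff_natDegree, map_one, one_mul, ← zpow_natCast, S.v_zpow ha.symm,
      Int.cast_natCast]
  obtain ⟨i, hi, hin, hgi⟩ := S.toAddValuation.exists_ne_map_le_of_sum_eq_zero hsum
    (Finset.self_mem_range_succ n) (by rw [S.toAddValuation_apply, hgn]; exact WithTop.coe_ne_top)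
  have hin' : (i : ℚ) + 1 ≤ n := by
    exact_mod_cast Nat.lt_of_le_of_ne (Finset.mem_range_succ_iff.1 hi) hin
  have hia : 1 + i * a ≤ n * a := WithTop.coe_le_coe.1
    ((hf.le_v_coeff_mul_pow ha.symm (by exact_mod_cast hin')).trans (by simpa [hgn] using hgi))
  have hapos : 0 < a := by nlinarith
  have hna : 1 ≤ n * a := by nlinarith
  obtain ⟨j, hj, hj0, hgj⟩ := S.toAddValuation.exists_ne_map_le_of_sum_eq_zero hsum
    (Finset.mem_range.2 n.succ_pos) (by rw [S.toAddValuation_apply, hg0]; exact WithTop.one_ne_top)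
  rw [S.toAddValuation_apply, S.toAddValuation_apply, hg0, ← WithTop.coe_one] at hgj
  rcases (Finset.mem_range_succ_iff.1 hj).lt_or_eq with hjn | rfl
  · have hja := WithTop.coe_le_coe.1 ((hf.le_v_coeff_mul_pow ha.symm hjn).trans hgj)
    have hj1 : (1 : ℚ) ≤ j := Nat.one_le_cast.2 (Nat.pos_of_ne_zero hj0)
    nlinarith
  · rw [hgn, WithTop.coe_le_coe] at hgj
    rw [← ha, WithTop.coe_eq_coe, eq_div_iff hn.ne']
    linarith

end PadicSetup.IsEisensteinOfDegree

theorem PadicSetup.rho_self (S : PadicSetup p K Ω) {f : K[X]} {n : ℕ} (hmon : f.Monic)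
    (hdeg : f.natDegree = n) (α : Ω) : S.rho f n α n = 1 := by
  rw [PadicSetup.rho, Finset.Icc_self, Finset.sum_singleton, ← hdeg, hmon.coeff_natDegree,
    Nat.choose_self, sub_self, zpow_zero, map_one, Nat.cast_one, one_mul, one_mul]

theorem ramification_polygon_residual_polynomials_compatible_general
    (S : PadicSetup p K Ω)
    (κ : Type*) [Field κ] (res : Ω → κ)
    (res_one : res 1 = 1)
    (res_zero_iff : ∀ x : Ω, 0 ≤ S.v x → (res x = 0 ↔ 0 < S.v x))
    (f : K[X]) (n : ℕ) (hf : S.IsEisensteinOfDegree f n)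
    (α : Ω) (hα : aeval α f = 0)
    (ℓ : ℕ) (hℓ : 1 ≤ ℓ)
    (x : ℕ → ℕ) (hxmono : ∀ t < ℓ, x t < x (t + 1)) (hxlast : x ℓ = n)
    (m : ℕ → ℤ)
    (hm : ∀ t ≤ ℓ, ((n : ℚ) : WithTop ℚ) * S.v (S.rho f n α (x t)) = ((m t : ℚ) : WithTop ℚ))
    (h e : ℕ → ℕ)
    (hcop : ∀ t, 1 ≤ t → t ≤ ℓ → 0 < e t ∧ Nat.Coprime (h t) (e t))
    (hslope : ∀ t, 1 ≤ t → t ≤ ℓ →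
      (e t : ℤ) * (m (t - 1) - m t) = (h t : ℤ) * ((x t : ℤ) - (x (t - 1) : ℤ)))
    (A : ℕ → Polynomial κ)
    (hA : ∀ t, 1 ≤ t → t ≤ ℓ →
      A t = ∑ j ∈ Finset.range ((x t - x (t - 1)) / e t + 1),
        C (res (S.rho f n α (x (t - 1) + j * e t) * α ^ ((j : ℤ) * (h t : ℤ) - m (t - 1))))
          * X ^ j) :
    (∀ t, 1 ≤ t → t < ℓ → (A t).leadingCoeff = (A (t + 1)).coeff 0) ∧ (A ℓ).Monic := by
  have hlc : ∀ t, 1 ≤ t → t ≤ ℓ → (A t).leadingCoeff = res (S.rho f n α (x t) * α ^ (-m t)) := by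
    intro t ht₁ htℓ
    have hx : x (t - 1) ≤ x t := by
      simpa [Nat.sub_add_cancel ht₁] using (hxmono (t - 1) (by omega)).le
    rw [hA t ht₁ htℓ]
    exact S.leadingCoeff_residualPolynomial res_zero_iff hf.pos.ne' (hf.v_root hα) _
      (hcop t ht₁ htℓ).2 (hcop t ht₁ htℓ).1 hx (hslope t ht₁ htℓ) (hm t htℓ)
  refine ⟨fun t ht₁ htℓ => ?_, ?_⟩
  · rw [hlc t ht₁ htℓ.le, hA (t + 1) (by omega) (by omega)]
    exact (coeff_zero_residualPolynomial _ _ _ _ _ _ _ _).symm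
  · have hρ : S.rho f n α (x ℓ) = 1 := hxlast ▸ S.rho_self hf.1 hf.2.1 α
    have hmℓ : m ℓ = 0 := by
      have := hm ℓ le_rfl
      rw [hρ, S.v_one, mul_zero] at this
      exact_mod_cast this.symm
    rw [Monic, hlc ℓ hℓ le_rfl, hρ, hmℓ, neg_zero, zpow_zero, one_mul, res_one]

/-- Let `f` be Eisenstein of degree `n` over `K` with root `α`, and let
the ramification polygon of `f` (the Newton polygon of `ρ(x) = f(αx+α)/αⁿ` w.r.t.
`v_α = n·v`) have segments `S_1, …, S_ℓ` with vertex abscissas `1 = x 0 < … < x ℓ = n`,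
ordinates `m t = v_α(ρ_{x t})`, slopes `-h t / e t` in lowest terms (strictly increasing),
and residual polynomials `A t ∈ κ[x]`.  Then `A ℓ` is monic, and for `1 ≤ t < ℓ` the
leading coefficient of `A t` equals the constant coefficient of `A (t+1)`. -/
theorem ramification_polygon_residual_polynomials_compatible
    [FiniteDimensional ℚ_[p] K] [IsAlgClosed Ω] [Algebra.IsAlgebraic K Ω]
    (S : PadicSetup p K Ω)
    (κ : Type*) [Field κ] (res : Ω → κ)
    (res_add : ∀ x y : Ω, 0 ≤ S.v x → 0 ≤ S.v y → res (x + y) = res x + res y)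
    (res_mul : ∀ x y : Ω, 0 ≤ S.v x → 0 ≤ S.v y → res (x * y) = res x * res y)
    (res_one : res 1 = 1)
    (res_zero_iff : ∀ x : Ω, 0 ≤ S.v x → (res x = 0 ↔ 0 < S.v x))
    (f : K[X]) (n : ℕ) (hn : 0 < n) (hf : S.IsEisensteinOfDegree f n)
    (α : Ω) (hα : aeval α f = 0)
    (ℓ : ℕ) (hℓ : 1 ≤ ℓ)
    (x : ℕ → ℕ) (hxmono : ∀ t < ℓ, x t < x (t + 1)) (hx0 : x 0 = 1) (hxlast : x ℓ = n)
    (m : ℕ → ℤ)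
    (hm : ∀ t ≤ ℓ, ((n : ℚ) : WithTop ℚ) * S.v (S.rho f n α (x t)) = ((m t : ℚ) : WithTop ℚ))
    (h e : ℕ → ℕ)
    (hcop : ∀ t, 1 ≤ t → t ≤ ℓ → 0 < e t ∧ Nat.Coprime (h t) (e t))
    (hslope : ∀ t, 1 ≤ t → t ≤ ℓ →
      (e t : ℤ) * (m (t - 1) - m t) = (h t : ℤ) * ((x t : ℤ) - (x (t - 1) : ℤ)))
    (habove : ∀ t, 1 ≤ t → t ≤ ℓ → ∀ i, x (t - 1) ≤ i → i ≤ x t →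
      ((((m (t - 1) : ℚ) - ((h t : ℚ) / (e t : ℚ)) * ((i : ℚ) - (x (t - 1) : ℚ))) : ℚ) : WithTop ℚ)
        ≤ ((n : ℚ) : WithTop ℚ) * S.v (S.rho f n α i))
    (hconvex : ∀ t, 1 ≤ t → t < ℓ → h (t + 1) * e t < h t * e (t + 1))
    (A : ℕ → Polynomial κ)
    (hA : ∀ t, 1 ≤ t → t ≤ ℓ →
      A t = ∑ j ∈ Finset.range ((x t - x (t - 1)) / e t + 1),
        C (res (S.rho f n α (x (t - 1) + j * e t) * α ^ ((j : ℤ) * (h t : ℤ) - m (t - 1))))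
          * X ^ j) :
    (∀ t, 1 ≤ t → t < ℓ → (A t).leadingCoeff = (A (t + 1)).coeff 0) ∧ (A ℓ).Monic :=
  ramification_polygon_residual_polynomials_compatible_general S κ res res_one res_zero_iff f n hf α
    hα ℓ hℓ x hxmono hxlast m hm h e hcop hslope A hA
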